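/- arXiv:2505.11082 — 2 statements merged into one kernel-verified Lean document; each statement's English description precedes it below -/
import Mathlib

section
/- Let d ∈ ℕ_{>0} and let G be a nonempty finite simple d-regular graph (every vertex has degree exactly d). Then ffn(G) ≥ d + 1, and if d ∈ {1, 2} then ffn(G) = d + 1. -/
open scoped Classical
noncomputable section

variable {V : Type*}

/-- The neighbourhood of a set of vertices: all vertices outside `S` adjacent to some
vertex of `S`. -/
def nbhd [Fintype V] (G : SimpleGraph V) (S : Finset V) : Finset V :=
  Finset.univ.filter fun v => v ∉ S ∧ ∃ u ∈ S, G.Adj u v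

/-- The burning sets of a strategy `F` (where `F i` is the firefighter set at time `i`):
`B 0 = V` and `B (t+1) = (B t \ F (t+1)) ∪ N(B t \ F (t+1))`. -/
def burn [Fintype V] (G : SimpleGraph V) (F : ℕ → Finset V) : ℕ → Finset V
  | 0 => Finset.univ
  | t + 1 => (burn G F t \ F (t + 1)) ∪ nbhd G (burn G F t \ F (t + 1))

/-- `F` is a `T`-winning `m`-strategy for `G`. -/
def WinningStrategy [Fintype V] (G : SimpleGraph V) (m T : ℕ) (F : ℕ → Finset V) : Prop :=
  (∀ i, (F i).card ≤ m) ∧ burn G F T = ∅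

/-- The firefighter number of `G`: the least `m` admitting a winning `m`-strategy. -/
def ffn [Fintype V] (G : SimpleGraph V) : ℕ :=
  sInf {m | ∃ T F, WinningStrategy G m T F}


/-!
Lower bound: with at most `d` firefighters on a graph of minimum degree `d`, every protected
vertex still has an unprotected, hence burning, neighbour, so the whole graph keeps burning.

Upper bound for `d ≤ 2`: keep as invariant that the burning set `B` has at most `d` vertices with a
neighbour outside `B`. Protecting these, one vertex `b` of them (any vertex of `B` if there are
none) and the burning neighbours of `b` costs at most `d + 1` firefighters; the fire cannot spread
out of `B` and `b` is extinguished. Every new boundary vertex is either protected or the unique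
burning neighbour of a protected vertex that no longer burns (such a vertex has a neighbour outside
the new burning set and degree at most `2`). So the new boundary is no larger than the protected
set without `b`, which has at most `d` vertices, and `B` shrinks until it is empty.
-/

section Firefighting

variable [Fintype V] {G : SimpleGraph V}

lemma mem_nbhd {S : Finset V} {v : V} : v ∈ nbhd G S ↔ v ∉ S ∧ ∃ u ∈ S, G.Adj u v := by
  simp [nbhd]

variable (G) in
def burnStep (B F : Finset V) : Finset V :=
  (B \ F) ∪ nbhd G (B \ F)

lemma mem_burnStep {B F : Finset V} {v : V} :
    v ∈ burnStep G B F ↔ v ∈ B \ F ∨ ∃ u ∈ B \ F, G.Adj u v := by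
  simp only [burnStep, Finset.mem_union, mem_nbhd]
  tauto

variable (G) in
def burnFrom (F : ℕ → Finset V) (B : Finset V) : ℕ → Finset V
  | 0 => B
  | t + 1 => burnStep G (burnFrom F B t) (F (t + 1))

lemma burn_eq_burnFrom_univ (F : ℕ → Finset V) : ∀ t, burn G F t = burnFrom G F Finset.univ t
  | 0 => rfl
  | t + 1 => by rw [burn, burnFrom, burn_eq_burnFrom_univ F t, burnStep]

variable (G) in
def Extinguishable (m : ℕ) (B : Finset V) : Prop :=
  ∃ T F, (∀ i, (F i).card ≤ m) ∧ burnFrom G F B T = ∅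

lemma extinguishable_empty {m : ℕ} : Extinguishable G m ∅ :=
  ⟨0, fun _ => ∅, fun _ => by simp, rfl⟩

lemma Extinguishable.of_burnStep {m : ℕ} {B F₀ : Finset V} (hF₀ : F₀.card ≤ m)
    (h : Extinguishable G m (burnStep G B F₀)) : Extinguishable G m B := by
  obtain ⟨T, F, hF, hT⟩ := h
  let F' : ℕ → Finset V := fun n => if n = 1 then F₀ else F (n - 1)
  have hshift : ∀ t, burnFrom G F' B (t + 1) = burnFrom G F (burnStep G B F₀) t := by
    intro t
    induction t with
    | zero => simp [burnFrom, F']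
    | succ t ih =>
      change burnStep G (burnFrom G F' B (t + 1)) (F' (t + 2)) = burnStep G _ (F (t + 1))
      simp [ih, F']
  refine ⟨T + 1, F', fun i => ?_, by rw [hshift, hT]⟩
  by_cases hi : i = 1 <;> simp [F', hi, hF₀, hF]

lemma Extinguishable.exists_winningStrategy {m : ℕ} (h : Extinguishable G m Finset.univ) :
    ∃ T F, WinningStrategy G m T F := by
  obtain ⟨T, F, hF, hT⟩ := h
  exact ⟨T, F, hF, by rw [burn_eq_burnFrom_univ, hT]⟩

lemma ffn_le_of_extinguishable {m : ℕ} (h : Extinguishable G m Finset.univ) : ffn G ≤ m :=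
  Nat.sInf_le h.exists_winningStrategy

lemma extinguishable_univ_card : Extinguishable G (Fintype.card V) Finset.univ := by
  refine Extinguishable.of_burnStep (F₀ := Finset.univ) Finset.card_univ.le ?_
  have : burnStep G Finset.univ Finset.univ = ∅ := by ext; simp [mem_burnStep]
  exact this ▸ extinguishable_empty

lemma burnStep_univ_of_card_le_degree {F : Finset V} (hF : ∀ v, F.card ≤ G.degree v) :
    burnStep G Finset.univ F = Finset.univ := by
  refine Finset.eq_univ_of_forall fun v => mem_burnStep.mpr ?_
  by_cases hv : v ∈ F
  · right
    by_contra! hN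
    have hsub : G.neighborFinset v ⊆ F.erase v := fun u hu => by
      rw [SimpleGraph.mem_neighborFinset] at hu
      exact Finset.mem_erase.mpr ⟨hu.ne', by_contra fun huF => hN u (by simpa using huF) hu.symm⟩
    have := (Finset.card_le_card hsub).trans_lt (Finset.card_erase_lt_of_mem hv)
    exact (hF v).not_gt (by simpa using this)
  · exact Or.inl (by simpa using hv)

lemma burn_eq_univ {F : ℕ → Finset V} (hF : ∀ i v, (F i).card ≤ G.degree v) :
    ∀ t, burn G F t = Finset.univ
  | 0 => rfl
  | t + 1 => by rw [burn, burn_eq_univ hF t, ← burnStep, burnStep_univ_of_card_le_degree (hF _)]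

lemma lt_ffn_of_le_degree [Nonempty V] {m : ℕ} (hm : ∀ v, m ≤ G.degree v) : m < ffn G := by
  have hne : {k | ∃ T F, WinningStrategy G k T F}.Nonempty :=
    ⟨_, extinguishable_univ_card.exists_winningStrategy⟩
  refine le_csInf hne ?_
  rintro k ⟨T, F, hF, hT⟩
  by_contra! hk
  rw [burn_eq_univ fun i v => (hF i).trans (Nat.lt_succ_iff.mp hk |>.trans (hm v))] at hT
  exact Finset.univ_nonempty.ne_empty hT

variable (G) in
def innerBoundary (B : Finset V) : Finset V :=
  B.filter fun x => ∃ w ∉ B, G.Adj x w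

@[simp]
lemma mem_innerBoundary {B : Finset V} {x : V} :
    x ∈ innerBoundary G B ↔ x ∈ B ∧ ∃ w ∉ B, G.Adj x w := by
  simp [innerBoundary]

lemma innerBoundary_univ : innerBoundary G Finset.univ = ∅ := by
  ext; simp

lemma innerBoundary_subset (B : Finset V) : innerBoundary G B ⊆ B :=
  Finset.filter_subset _ _

lemma card_neighborFinset_inter_lt_degree {A : Finset V} {y w : V} (hw : w ∉ A)
    (hyw : G.Adj y w) : (G.neighborFinset y ∩ A).card < G.degree y := by
  rw [← G.card_neighborFinset_eq_degree]
  refine Finset.card_lt_card ⟨Finset.inter_subset_left, fun h => hw ?_⟩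
  exact (Finset.mem_inter.mp (h ((G.mem_neighborFinset _ _).mpr hyw))).2

lemma card_le_card_of_forall_mem_or_adj (hdeg : ∀ v, G.degree v ≤ 2) {A S : Finset V}
    (hS : ∀ y ∈ S \ A, ∃ w ∉ A, G.Adj y w) (hA : ∀ x ∈ A, x ∈ S ∨ ∃ y ∈ S \ A, G.Adj y x) :
    A.card ≤ S.card := by
  have hsub : A ⊆ (S ∩ A) ∪ (S \ A).biUnion fun y => G.neighborFinset y ∩ A := by
    intro x hx
    rcases hA x hx with hxS | ⟨y, hy, hyx⟩
    · exact Finset.mem_union_left _ (Finset.mem_inter.mpr ⟨hxS, hx⟩)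
    · exact Finset.mem_union_right _ (Finset.mem_biUnion.mpr ⟨y, hy, by simpa [hx] using hyx⟩)
  have hle_one : ∀ y ∈ S \ A, (G.neighborFinset y ∩ A).card ≤ 1 := fun y hy => by
    obtain ⟨w, hw, hyw⟩ := hS y hy
    have := card_neighborFinset_inter_lt_degree hw hyw
    have := hdeg y
    omega
  calc A.card
      ≤ (S ∩ A).card + ∑ y ∈ S \ A, (G.neighborFinset y ∩ A).card :=
        (Finset.card_le_card hsub).trans <|
          (Finset.card_union_le _ _).trans (Nat.add_le_add_left Finset.card_biUnion_le _)
    _ ≤ (S ∩ A).card + (S \ A).card := by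
        gcongr
        simpa using Finset.sum_le_card_nsmul _ _ _ hle_one
    _ = S.card := Finset.card_inter_add_card_sdiff S A

variable (G) in
def guardSet (B : Finset V) (b : V) : Finset V :=
  insert b (innerBoundary G B ∪ (G.neighborFinset b ∩ B))

section guardSet

variable {B : Finset V} {b : V}

lemma innerBoundary_subset_guardSet : innerBoundary G B ⊆ guardSet G B b :=
  fun _ hx => Finset.mem_insert_of_mem (Finset.mem_union_left _ hx)

lemma burnStep_guardSet_subset : burnStep G B (guardSet G B b) ⊆ B := by
  intro v hv
  rcases mem_burnStep.mp hv with hv | ⟨u, hu, huv⟩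
  · exact (Finset.mem_sdiff.mp hv).1
  · obtain ⟨huB, huF⟩ := Finset.mem_sdiff.mp hu
    by_contra hvB
    exact huF (innerBoundary_subset_guardSet (mem_innerBoundary.mpr ⟨huB, v, hvB, huv⟩))

lemma notMem_burnStep_guardSet : b ∉ burnStep G B (guardSet G B b) := by
  rw [mem_burnStep]
  rintro (hb | ⟨u, hu, hub⟩)
  · exact (Finset.mem_sdiff.mp hb).2 (Finset.mem_insert_self _ _)
  · obtain ⟨huB, huF⟩ := Finset.mem_sdiff.mp hu
    exact huF (by simp [guardSet, huB, hub.symm])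

lemma burnStep_guardSet_ssubset (hb : b ∈ B) : burnStep G B (guardSet G B b) ⊂ B :=
  ⟨burnStep_guardSet_subset, fun h => notMem_burnStep_guardSet (h hb)⟩

lemma exists_adj_notMem_burnStep_guardSet {y : V} (hy : y ∈ (guardSet G B b).erase b) :
    ∃ w ∉ burnStep G B (guardSet G B b), G.Adj y w := by
  simp only [guardSet, Finset.mem_erase, Finset.mem_insert, Finset.mem_union,
    mem_innerBoundary, Finset.mem_inter, SimpleGraph.mem_neighborFinset] at hy
  rcases hy with ⟨hyb, (rfl | ⟨-, w, hw, hyw⟩ | ⟨hby, -⟩)⟩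
  · exact absurd rfl hyb
  · exact ⟨w, fun h => hw (burnStep_guardSet_subset h), hyw⟩
  · exact ⟨b, notMem_burnStep_guardSet, hby.symm⟩

lemma mem_or_adj_of_mem_innerBoundary_burnStep_guardSet {x : V}
    (hx : x ∈ innerBoundary G (burnStep G B (guardSet G B b))) :
    x ∈ (guardSet G B b).erase b ∨
      ∃ y ∈ (guardSet G B b).erase b \ burnStep G B (guardSet G B b), G.Adj y x := by
  obtain ⟨hxB', y, hy, hxy⟩ := mem_innerBoundary.mp hx
  have hxb : x ≠ b := fun h => notMem_burnStep_guardSet (h ▸ hxB')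
  have hxB : x ∈ B := burnStep_guardSet_subset hxB'
  by_cases hyB : y ∉ B
  · exact Or.inl (Finset.mem_erase.mpr
      ⟨hxb, innerBoundary_subset_guardSet (mem_innerBoundary.mpr ⟨hxB, y, hyB, hxy⟩)⟩)
  by_cases hyb : y = b
  · subst hyb
    exact Or.inl (by simp [guardSet, hxb, hxB, hxy.symm])
  refine Or.inr ⟨y, ?_, hxy.symm⟩
  have hyF : y ∈ guardSet G B b := by
    by_contra hyF
    exact hy (mem_burnStep.mpr (Or.inl (Finset.mem_sdiff.mpr ⟨not_not.mp hyB, hyF⟩)))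
  exact Finset.mem_sdiff.mpr ⟨Finset.mem_erase.mpr ⟨hyb, hyF⟩, hy⟩

lemma card_guardSet_erase_le {d : ℕ} (hdeg : G.degree b ≤ d) (hd : d ≤ 2)
    (hB : (innerBoundary G B).card ≤ d) (hb : b ∈ innerBoundary G B ∨ innerBoundary G B = ∅) :
    ((guardSet G B b).erase b).card ≤ d := by
  have hsub : (guardSet G B b).erase b ⊆ (innerBoundary G B).erase b ∪ (G.neighborFinset b ∩ B) :=
    fun x hx => by
      simp only [guardSet, Finset.mem_erase, Finset.mem_insert, Finset.mem_union] at hx ⊢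
      tauto
  refine (Finset.card_le_card hsub).trans ((Finset.card_union_le _ _).trans ?_)
  have hN : (G.neighborFinset b ∩ B).card ≤ G.degree b := by
    rw [← G.card_neighborFinset_eq_degree]
    exact Finset.card_le_card Finset.inter_subset_left
  rcases hb with hb | hempty
  · obtain ⟨-, w, hw, hbw⟩ := mem_innerBoundary.mp hb
    have := card_neighborFinset_inter_lt_degree hw hbw
    have := Finset.card_erase_of_mem hb
    omega
  · simp only [hempty, Finset.erase_empty, Finset.card_empty]
    omega

end guardSet

lemma exists_guard_of_card_innerBoundary_le {d : ℕ} (hdeg : ∀ v, G.degree v ≤ d) (hd : d ≤ 2)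
    {B : Finset V} (hne : B.Nonempty) (hB : (innerBoundary G B).card ≤ d) :
    ∃ F : Finset V, F.card ≤ d + 1 ∧ burnStep G B F ⊂ B ∧
      (innerBoundary G (burnStep G B F)).card ≤ d := by
  obtain ⟨b, hbB, hb⟩ : ∃ b ∈ B, b ∈ innerBoundary G B ∨ innerBoundary G B = ∅ := by
    rcases (innerBoundary G B).eq_empty_or_nonempty with h | ⟨b, hb⟩
    · obtain ⟨b, hbB⟩ := hne
      exact ⟨b, hbB, Or.inr h⟩
    · exact ⟨b, innerBoundary_subset B hb, Or.inl hb⟩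
  have hS := card_guardSet_erase_le (hdeg b) hd hB hb
  refine ⟨guardSet G B b, ?_, burnStep_guardSet_ssubset hbB, ?_⟩
  · have := Finset.card_erase_add_one (s := guardSet G B b) (Finset.mem_insert_self b _)
    omega
  refine (card_le_card_of_forall_mem_or_adj (fun v => (hdeg v).trans hd) ?_ ?_).trans hS
  · intro y hy
    obtain ⟨w, hw, hyw⟩ := exists_adj_notMem_burnStep_guardSet (Finset.mem_sdiff.mp hy).1
    exact ⟨w, fun h => hw (innerBoundary_subset _ h), hyw⟩
  · intro x hx
    refine (mem_or_adj_of_mem_innerBoundary_burnStep_guardSet hx).imp_right ?_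
    rintro ⟨y, hy, hyx⟩
    exact ⟨y, Finset.sdiff_subset_sdiff le_rfl (innerBoundary_subset _) hy, hyx⟩

lemma extinguishable_of_card_innerBoundary_le {d : ℕ} (hdeg : ∀ v, G.degree v ≤ d) (hd : d ≤ 2)
    (B : Finset V) (hB : (innerBoundary G B).card ≤ d) : Extinguishable G (d + 1) B := by
  induction B using Finset.strongInduction with
  | H B ih =>
    rcases B.eq_empty_or_nonempty with rfl | hne
    · exact extinguishable_empty
    obtain ⟨F, hF, hssub, hB'⟩ := exists_guard_of_card_innerBoundary_le hdeg hd hne hB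
    exact (ih _ hssub hB').of_burnStep hF

lemma ffn_le_of_degree_le {d : ℕ} (hdeg : ∀ v, G.degree v ≤ d) (hd : d ≤ 2) : ffn G ≤ d + 1 :=
  ffn_le_of_extinguishable <|
    extinguishable_of_card_innerBoundary_le hdeg hd _ (by simp [innerBoundary_univ])

end Firefighting

theorem ffn_regular_general [Fintype V] [Nonempty V] (G : SimpleGraph V) (d : ℕ)
    (hreg : G.IsRegularOfDegree d) :
    d + 1 ≤ ffn G ∧ (d = 1 ∨ d = 2 → ffn G = d + 1) := by
  have hlow : d + 1 ≤ ffn G := lt_ffn_of_le_degree fun v => (hreg v).ge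
  refine ⟨hlow, fun hd => le_antisymm (ffn_le_of_degree_le (fun v => (hreg v).le) ?_) hlow⟩
  omega

/-- Every nonempty `d`-regular graph satisfies `ffn G ≥ d + 1`, with equality for
`d ∈ {1, 2}`. -/
theorem ffn_regular [Fintype V] [Nonempty V] (G : SimpleGraph V) (d : ℕ) (hd : 0 < d)
    (hreg : G.IsRegularOfDegree d) :
    d + 1 ≤ ffn G ∧ (d = 1 ∨ d = 2 → ffn G = d + 1) :=
  ffn_regular_general G d hreg
end
end

section
/- Let G=(V,E) be a finite simple graph and let 𝔾 be the 2-blowup of G, i.e. the graph on vertex set V × {0,1} in which (u,a) and (v,b) are adjacent if and only if u = v and a ≠ b, or u and v are adjacent in G. Then for every m, T ∈ ℕ_{>0}: G has a T-winning m-strategy if and only if 𝔾 has a T-winning 2m-strategy. -/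
open scoped Classical
noncomputable section

variable {V : Type*}

/-- The 2-blowup of `G`: on vertex set `V × {0,1}`, vertices `(u, a)` and `(v, b)` are
adjacent iff `u = v` and `a ≠ b`, or `u` and `v` are adjacent in `G`. -/
def twoBlowup (G : SimpleGraph V) : SimpleGraph (V × Bool) where
  Adj x y := (x.1 = y.1 ∧ x.2 ≠ y.2) ∨ G.Adj x.1 y.1
  symm := by
    constructor
    rintro ⟨u, a⟩ ⟨v, b⟩ (⟨h1, h2⟩ | h)
    · exact Or.inl ⟨h1.symm, h2.symm⟩
    · exact Or.inr h.symm
  loopless := by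
    constructor
    rintro ⟨u, a⟩ (⟨_, h⟩ | h)
    · exact h rfl
    · exact G.irrefl h

/-!
Protecting both copies of every vertex of `F i` makes the fire in the blowup the exact lift of
the fire in `G`. Conversely, given a strategy `F'` on the blowup, protect in `G` the vertices both
of whose copies lie in `F' i`; there are at most `m` of them. A vertex left unprotected has an
unprotected copy, and a burning unprotected copy ignites both copies of every vertex in its
closed neighbourhood, so the fire in `G` never outruns the shadow of the fire in the blowup.
-/

lemma mem_burn_succ [Fintype V] {G : SimpleGraph V} {F : ℕ → Finset V} {t : ℕ} {v : V} :
    v ∈ burn G F (t + 1) ↔ ∃ u ∈ burn G F t, u ∉ F (t + 1) ∧ (u = v ∨ G.Adj u v) := by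
  simp only [burn, Finset.mem_union, nbhd, Finset.mem_filter, Finset.mem_sdiff]
  constructor
  · rintro (hv | ⟨-, -, u, hu, huv⟩)
    exacts [⟨v, hv.1, hv.2, Or.inl rfl⟩, ⟨u, hu.1, hu.2, Or.inr huv⟩]
  · rintro ⟨u, hu, huF, rfl | huv⟩
    · exact Or.inl ⟨hu, huF⟩
    · by_cases hv : v ∈ burn G F t ∧ v ∉ F (t + 1)
      exacts [Or.inl hv, Or.inr ⟨Finset.mem_univ v, hv, u, ⟨hu, huF⟩, huv⟩]

lemma twoBlowup_eq_or_adj {G : SimpleGraph V} {u v : V} (h : u = v ∨ G.Adj u v) (a b : Bool) :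
    (u, a) = (v, b) ∨ (twoBlowup G).Adj (u, a) (v, b) := by
  rcases h with rfl | huv
  · by_cases hab : a = b
    exacts [Or.inl (by rw [hab]), Or.inr (Or.inl ⟨rfl, hab⟩)]
  · exact Or.inr (Or.inr huv)

lemma eq_or_adj_of_twoBlowup {G : SimpleGraph V} {x y : V × Bool}
    (h : x = y ∨ (twoBlowup G).Adj x y) : x.1 = y.1 ∨ G.Adj x.1 y.1 := by
  rcases h with rfl | ⟨hxy, -⟩ | hxy
  exacts [Or.inl rfl, Or.inl hxy, Or.inr hxy]

section Simulation

variable [Fintype V] {G : SimpleGraph V} {F : ℕ → Finset V} {F' : ℕ → Finset (V × Bool)}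

lemma mem_burn_twoBlowup_of_mem_burn (hF : ∀ i u, (∀ a, (u, a) ∈ F' i) → u ∈ F i)
    {t : ℕ} {v : V} (hv : v ∈ burn G F t) (b : Bool) : (v, b) ∈ burn (twoBlowup G) F' t := by
  induction t generalizing v b with
  | zero => exact Finset.mem_univ _
  | succ t ih =>
    obtain ⟨u, hu, huF, huv⟩ := mem_burn_succ.mp hv
    obtain ⟨a, ha⟩ : ∃ a, (u, a) ∉ F' (t + 1) := by
      by_contra! h
      exact huF (hF _ u h)
    exact mem_burn_succ.mpr
      ⟨(u, a), ih hu a, ha, twoBlowup_eq_or_adj huv a b⟩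

lemma mem_burn_of_mem_burn_twoBlowup (hF : ∀ i u a, u ∈ F i → (u, a) ∈ F' i)
    {t : ℕ} {x : V × Bool} (hx : x ∈ burn (twoBlowup G) F' t) : x.1 ∈ burn G F t := by
  induction t generalizing x with
  | zero => exact Finset.mem_univ _
  | succ t ih =>
    obtain ⟨y, hy, hyF, hyx⟩ := mem_burn_succ.mp hx
    exact mem_burn_succ.mpr
      ⟨y.1, ih hy, fun h => hyF (hF _ _ _ h), eq_or_adj_of_twoBlowup hyx⟩

end Simulation

lemma card_product_bool {α : Type*} (s : Finset α) :
    (s ×ˢ (Finset.univ : Finset Bool)).card = 2 * s.card := by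
  rw [Finset.card_product, Finset.card_univ, Fintype.card_bool, mul_comm]

lemma card_le_of_product_bool_subset [Fintype V] {s : Finset V} {s' : Finset (V × Bool)}
    {m : ℕ} (hs : s ×ˢ Finset.univ ⊆ s') (hs' : s'.card ≤ 2 * m) : s.card ≤ m := by
  have := (Finset.card_le_card hs).trans hs'
  rw [card_product_bool] at this
  omega

theorem winning_twoBlowup_iff_general [Fintype V] (G : SimpleGraph V) (m T : ℕ) :
    (∃ F, WinningStrategy G m T F) ↔
      (∃ F, WinningStrategy (twoBlowup G) (2 * m) T F) := by
  constructor
  · rintro ⟨F, hcard, hwin⟩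
    refine ⟨fun i => F i ×ˢ Finset.univ, fun i => ?_, Finset.eq_empty_of_forall_notMem ?_⟩
    · rw [card_product_bool]
      exact Nat.mul_le_mul_left 2 (hcard i)
    · intro x hx
      have := mem_burn_of_mem_burn_twoBlowup (F := F)
        (fun i u a hu => Finset.mem_product.mpr ⟨hu, Finset.mem_univ a⟩) hx
      simp [hwin] at this
  · rintro ⟨F', hcard, hwin⟩
    let F i := Finset.univ.filter fun u => ∀ a, (u, a) ∈ F' i
    refine ⟨F, fun i => card_le_of_product_bool_subset ?_ (hcard i),
      Finset.eq_empty_of_forall_notMem fun v hv => ?_⟩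
    · rintro ⟨u, a⟩ hu
      exact (Finset.mem_filter.mp (Finset.mem_product.mp hu).1).2 a
    · have := mem_burn_twoBlowup_of_mem_burn (F' := F')
        (fun i u hu => Finset.mem_filter.mpr ⟨Finset.mem_univ u, hu⟩) hv false
      simp [hwin] at this

/-- `G` has a `T`-winning `m`-strategy iff its 2-blowup has a `T`-winning
`2m`-strategy. -/
theorem winning_twoBlowup_iff [Fintype V] (G : SimpleGraph V) (m T : ℕ)
    (hm : 0 < m) (hT : 0 < T) :
    (∃ F, WinningStrategy G m T F) ↔
      (∃ F, WinningStrategy (twoBlowup G) (2 * m) T F) :=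
  winning_twoBlowup_iff_general G m T
end
end
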